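/- arXiv:1810.03175 — 6 statements merged into one kernel-verified Lean document; each statement's English description precedes it below -/
import Mathlib

section
/- For each M ∈ ℕ and each c ∈ (0,1], the set {f ∈ C[0,1] : λ(L_M(f)) ≥ c} is closed in C[0,1] with the sup norm, where λ is Lebesgue measure. -/
/-!
If `fₙ → f` in `C[0,1]` (pointwise convergence suffices), every point that is an `M`-Lipschitz
point of infinitely many `fₙ` is an `M`-Lipschitz point of `f`, so `L_M(f)` contains
`limsup L_M(fₙ)`. On the finite measure space `[0,1]` the measure of a `limsup` of sets is at
least the infimum of their measures (continuity from above for the tails), hence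
`λ(L_M(f)) ≥ c` whenever all `λ(L_M(fₙ)) ≥ c`.
-/

open Set MeasureTheory Filter Topology

theorem le_measure_limsup_of_forall_le {α : Type*} [MeasurableSpace α] {μ : Measure α}
    [IsFiniteMeasure μ] {s : ℕ → Set α} (hs : ∀ n, NullMeasurableSet (s n) μ)
    {c : ENNReal} (hc : ∀ n, c ≤ μ (s n)) : c ≤ μ (limsup s atTop) := by
  have htail : Antitone fun n => ⋃ i ≥ n, s i :=
    fun m n hmn => biUnion_subset_biUnion_left fun i hi => le_trans hmn hi
  rw [limsup_eq_iInf_iSup_of_nat, iInf_eq_iInter]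
  simp only [iSup_eq_iUnion]
  rw [htail.measure_iInter (fun n => .biUnion (to_countable _) fun i _ => hs i)
      ⟨0, measure_ne_top _ _⟩]
  exact le_iInf fun n => (hc n).trans (measure_mono (subset_biUnion_of_mem (le_refl n)))

section LipschitzPoints

variable {X : Type*} [PseudoMetricSpace X]

def lipschitzPoints (M : ℝ) (f : X → ℝ) : Set X :=
  {x | ∀ y, |f x - f y| ≤ M * dist x y}

theorem isClosed_lipschitzPoints (M : ℝ) {f : X → ℝ} (hf : Continuous f) :
    IsClosed (lipschitzPoints M f) := by
  simp only [lipschitzPoints, ofPred_forall]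
  exact isClosed_iInter fun y => isClosed_le (by fun_prop) (by fun_prop)

theorem limsup_lipschitzPoints_subset {ι : Type*} {l : Filter ι} (M : ℝ) {u : ι → X → ℝ}
    {f : X → ℝ} (hu : ∀ x, Tendsto (fun i => u i x) l (𝓝 (f x))) :
    limsup (fun i => lipschitzPoints M (u i)) l ⊆ lipschitzPoints M f := by
  intro x hx y
  rw [mem_limsup_iff_frequently_mem] at hx
  exact isClosed_Iic.mem_of_frequently_of_tendsto (hx.mono fun i hi => hi y)
    (((hu x).sub (hu y)).abs)

end LipschitzPoints

theorem stmt2_general (M : ℕ) (c : ℝ) :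
    IsClosed {f : C(Icc (0:ℝ) 1, ℝ) |
      ENNReal.ofReal c ≤ volume (Subtype.val ''
        {x : Icc (0:ℝ) 1 | ∀ y : Icc (0:ℝ) 1, |f x - f y| ≤ (M : ℝ) * |x.1 - y.1|})} := by
  change IsClosed {f : C(Icc (0:ℝ) 1, ℝ) |
    ENNReal.ofReal c ≤ volume (Subtype.val '' lipschitzPoints M f)}
  simp_rw [volume_image_subtype_coe measurableSet_Icc]
  refine IsSeqClosed.isClosed fun u f hu hlim => ?_
  have hpt : ∀ x, Tendsto (fun n => u n x) atTop (𝓝 (f x)) :=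
    fun x => ((continuous_eval_const x).tendsto f).comp hlim
  calc ENNReal.ofReal c
      ≤ volume (limsup (fun n => lipschitzPoints M (u n)) atTop) :=
        le_measure_limsup_of_forall_le
          (fun n => (isClosed_lipschitzPoints M (u n).continuous).nullMeasurableSet) hu
    _ ≤ volume (lipschitzPoints M f) := measure_mono (limsup_lipschitzPoints_subset M hpt)

/-- For each `M ∈ ℕ` and `c ∈ (0,1]`, the set `{f ∈ C[0,1] : λ(L_M(f)) ≥ c}` is closed in
`C[0,1]` with the sup norm, where `λ` is Lebesgue measure. -/
theorem stmt2 (M : ℕ) (c : ℝ) (hc : c ∈ Ioc (0:ℝ) 1) :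
    IsClosed {f : C(Icc (0:ℝ) 1, ℝ) |
      ENNReal.ofReal c ≤ volume (Subtype.val ''
        {x : Icc (0:ℝ) 1 | ∀ y : Icc (0:ℝ) 1, |f x - f y| ≤ (M : ℝ) * |x.1 - y.1|})} :=
  stmt2_general M c
end

section
/- There exist a ∈ (0,1) and b ∈ ℕ such that for every x ∈ (0,1], every strictly increasing sequence (s_j) of positive integers, and every sequence (r_j) with values in {-1,1}, the function y ↦ |Σ_{j=0}^∞ r_j a^{s_j} (cos(b^{s_j} π y) − cos(b^{s_j} π x)) / (y − x)| is unbounded as y ranges over [0,1] \ {x}. -/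
/-!
Take `a = 1/14` and `b = 147`. Given `x` and a scale `m = s J`, round `b^m x` to an integer `k`
and step to a neighbouring integer `n = k ± 1` for which `y = n / b^m` stays in `[0,1]`. Then the
`J`-th cosine changes sign between `x` and `y`, so the `J`-th term has size at least `a^m`, while
`|y - x| ≤ 3 / (2 b^m)`. By the Lipschitz bound for cosine the earlier terms add up to at most
`3π / (2(ab - 1)) · a^m`, and the later ones to at most `2a / (1 - a) · a^m`. For these `a, b` the
difference quotient is therefore at least a fixed positive multiple of `(ab)^m`, which is
unbounded in `J`.
-/

open Set Real

theorem one_le_abs_cos_int_mul_pi_sub_cos {k n : ℤ} (hnk : Odd (n - k)) {t : ℝ}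
    (ht : |t - k| ≤ 1 / 2) : 1 ≤ |cos (n * π) - cos (t * π)| := by
  have hn : cos (n * π) = -(-1) ^ k := by
    rw [cos_int_mul_pi, show n = (n - k) + k by ring, zpow_add₀ (by norm_num), hnk.neg_one_zpow]
    ring
  have ht' : cos (t * π) = (-1) ^ k * cos ((t - k) * π) := by
    rw [show t * π = k * π - -((t - k) * π) by ring, cos_int_mul_pi_sub, cos_neg]
  have hcos : 0 ≤ cos ((t - k) * π) := by
    have := abs_le.mp ht
    apply cos_nonneg_of_mem_Icc
    constructor <;> nlinarith [pi_pos]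
  rw [hn, ht', show -(-1 : ℝ) ^ k - (-1) ^ k * cos ((t - k) * π)
      = -(-1) ^ k * (1 + cos ((t - k) * π)) by ring, abs_mul, abs_neg, abs_neg_one_zpow,
    one_mul, abs_of_nonneg (by linarith)]
  linarith

theorem exists_near_one_le_abs_cos_sub_cos {N : ℝ} (hN : 1 ≤ N) {x : ℝ} (hx : x ∈ Icc 0 1) :
    ∃ y ∈ Icc (0 : ℝ) 1, y ≠ x ∧ |y - x| ≤ 3 / (2 * N) ∧
      1 ≤ |cos (N * π * y) - cos (N * π * x)| := by
  set k := round (N * x)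
  have hk : |N * x - k| ≤ 1 / 2 := abs_sub_round (N * x)
  have hk0 : 0 ≤ k := by
    have : (-1 : ℝ) < k := by linarith [abs_le.mp hk, mul_nonneg (by linarith : 0 ≤ N) hx.1]
    exact_mod_cast (show (-1 : ℤ) < k by exact_mod_cast this)
  obtain ⟨n, hnk, hn0, hnN⟩ : ∃ n : ℤ, (n - k = 1 ∨ n - k = -1) ∧ 0 ≤ n ∧ (n : ℝ) ≤ N := by
    rcases hk0.eq_or_lt with hk0 | hk1
    · exact ⟨k + 1, by omega, by omega, by simp [← hk0, hN]⟩
    · refine ⟨k - 1, by omega, by omega, ?_⟩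
      push_cast
      linarith [abs_le.mp hk, show N * x ≤ N by nlinarith [hx.2]]
  have hN0 : 0 < N := by linarith
  have hcos : 1 ≤ |cos (N * π * (n / N)) - cos (N * π * x)| := by
    rw [show N * π * (n / N) = n * π by field_simp, mul_right_comm]
    refine one_le_abs_cos_int_mul_pi_sub_cos ?_ hk
    rcases hnk with h | h <;> rw [h] <;> decide
  refine ⟨n / N, ⟨by positivity, (div_le_one hN0).mpr hnN⟩, ?_, ?_, hcos⟩
  · intro h
    rw [h, sub_self, abs_zero] at hcos
    exact absurd hcos (by norm_num)
  · have hnk' : |(n : ℝ) - k| ≤ 1 := by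
      rcases hnk with h | h <;> simp [← Int.cast_sub, h]
    rw [show n / N - x = (n - N * x) / N by field_simp, abs_div, abs_of_pos hN0,
      div_le_div_iff₀ hN0 (by positivity)]
    nlinarith [abs_sub_le (n : ℝ) k (N * x), abs_sub_comm (N * x) k]

section Series

variable {f : ℕ → ℝ} {s : ℕ → ℕ} {a C : ℝ}

theorem abs_sub_sum_range_sub_tsum_le_abs_tsum (hf : Summable f) (J : ℕ) :
    |f J| - ∑ j ∈ Finset.range J, |f j| - ∑' j, |f (j + (J + 1))| ≤ |∑' j, f j| := by
  rw [← hf.sum_add_tsum_nat_add (J + 1), Finset.sum_range_succ]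
  have hhead := Finset.abs_sum_le_sum_abs f (Finset.range J)
  have htail : |∑' j, f (j + (J + 1))| ≤ ∑' j, |f (j + (J + 1))| :=
    norm_tsum_le_tsum_norm (f := fun j ↦ f (j + (J + 1)))
      ((summable_nat_add_iff (f := fun j ↦ |f j|) (J + 1)).mpr hf.abs)
  set u := ∑ j ∈ Finset.range J, f j
  set w := ∑' j, f (j + (J + 1))
  have : |f J| ≤ |u + f J + w| + |u| + |w| := calc
    |f J| = |(u + f J + w) - u - w| := by ring_nf
    _ ≤ |u + f J + w - u| + |w| := abs_sub _ _
    _ ≤ |u + f J + w| + |u| + |w| := by gcongr; exact abs_sub _ _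
  linarith

theorem summable_of_abs_le_pow_strictMono (ha0 : 0 ≤ a) (ha1 : a < 1) (hs : StrictMono s)
    (hf : ∀ j, |f j| ≤ C * a ^ s j) : Summable f :=
  .of_norm_bounded
    (((summable_geometric_of_lt_one ha0 ha1).comp_injective hs.injective).mul_left C) hf

theorem tsum_abs_nat_add_le_of_abs_le_pow (ha0 : 0 ≤ a) (ha1 : a < 1) (hC : 0 ≤ C)
    (hs : StrictMono s) (hf : ∀ j, |f j| ≤ C * a ^ s j) (J : ℕ) :
    ∑' j, |f (j + (J + 1))| ≤ C * a ^ (s J + 1) / (1 - a) := by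
  have hle : ∀ j, |f (j + (J + 1))| ≤ C * a ^ (s J + 1) * a ^ j := fun j ↦ by
    refine (hf _).trans ?_
    rw [mul_assoc, ← pow_add]
    gcongr C * ?_
    refine pow_le_pow_of_le_one ha0 ha1.le ?_
    have := hs.add_le_nat (j + 1) J
    rw [show j + 1 + J = j + (J + 1) by omega] at this
    omega
  have hgeom := (summable_geometric_of_lt_one ha0 ha1).mul_left (C * a ^ (s J + 1))
  calc ∑' j, |f (j + (J + 1))| ≤ ∑' j, C * a ^ (s J + 1) * a ^ j :=
        (hgeom.of_nonneg_of_le (fun _ ↦ abs_nonneg _) hle).tsum_le_tsum hle hgeom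
    _ = C * a ^ (s J + 1) / (1 - a) := by
        rw [tsum_mul_left, tsum_geometric_of_lt_one ha0 ha1, div_eq_mul_inv]

theorem sum_range_pow_strictMono_le {q : ℝ} (hq : 1 < q) (hs : StrictMono s) (J : ℕ) :
    ∑ j ∈ Finset.range J, q ^ s j ≤ q ^ s J / (q - 1) := by
  calc ∑ j ∈ Finset.range J, q ^ s j = ∑ n ∈ (Finset.range J).image s, q ^ n :=
        (Finset.sum_image fun _ _ _ _ h ↦ hs.injective h).symm
    _ ≤ ∑ n ∈ Finset.range (s J), q ^ n := by
        refine Finset.sum_le_sum_of_subset_of_nonneg ?_ fun _ _ _ ↦ by positivity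
        intro n hn
        simp only [Finset.mem_image, Finset.mem_range] at hn ⊢
        obtain ⟨j, hj, rfl⟩ := hn
        exact hs hj
    _ ≤ q ^ s J / (q - 1) := by
        rw [geom_sum_eq hq.ne']
        gcongr
        linarith

end Series

section Term

variable {r c : ℝ}

theorem abs_mul_mul_cos_sub_cos_le_two (hr : |r| ≤ 1) (hc : 0 ≤ c) (u v : ℝ) :
    |r * c * (cos u - cos v)| ≤ 2 * c := by
  have h2 : |cos u - cos v| ≤ 2 := by
    linarith [abs_sub (cos u) (cos v), abs_cos_le_one u, abs_cos_le_one v]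
  rw [abs_mul, abs_mul, abs_of_nonneg hc]
  calc |r| * c * |cos u - cos v| ≤ 1 * c * 2 := by gcongr
    _ = 2 * c := by ring

theorem abs_mul_mul_cos_sub_cos_mul_le (hr : |r| ≤ 1) (hc : 0 ≤ c) {l : ℝ} (hl : 0 ≤ l)
    (x y : ℝ) : |r * c * (cos (l * y) - cos (l * x))| ≤ c * l * |y - x| := by
  have hlip : |cos (l * y) - cos (l * x)| ≤ l * |y - x| := by
    simpa only [← mul_sub, abs_mul, abs_of_nonneg hl] using abs_cos_sub_cos_le (l * y) (l * x)
  rw [abs_mul, abs_mul, abs_of_nonneg hc]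
  calc |r| * c * |cos (l * y) - cos (l * x)| ≤ 1 * c * (l * |y - x|) := by gcongr
    _ = c * l * |y - x| := by ring

end Term

noncomputable def lacunaryConst (a b : ℝ) : ℝ :=
  1 - 3 * π / (2 * (a * b - 1)) - 2 * a / (1 - a)

theorem exists_near_le_abs_lacunary_tsum {a b : ℝ} (ha0 : 0 < a) (ha1 : a < 1) (hab : 1 < a * b)
    {s : ℕ → ℕ} (hs : StrictMono s) {r : ℕ → ℝ} (hr : ∀ j, |r j| = 1) {x : ℝ}
    (hx : x ∈ Icc 0 1) (J : ℕ) :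
    ∃ y ∈ Icc (0 : ℝ) 1, y ≠ x ∧ |y - x| ≤ 3 / (2 * b ^ s J) ∧
      lacunaryConst a b * a ^ s J ≤
        |∑' j, r j * a ^ s j * (cos (b ^ s j * π * y) - cos (b ^ s j * π * x))| := by
  have hb0 : 0 ≤ b := by nlinarith
  have hbm : 1 ≤ b ^ s J := one_le_pow₀ (by nlinarith)
  obtain ⟨y, hy, hyx, hdist, hcos⟩ := exists_near_one_le_abs_cos_sub_cos hbm hx
  refine ⟨y, hy, hyx, hdist, ?_⟩
  set g := fun j ↦ r j * a ^ s j * (cos (b ^ s j * π * y) - cos (b ^ s j * π * x))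
  have hg2 (j : ℕ) : |g j| ≤ 2 * a ^ s j :=
    abs_mul_mul_cos_sub_cos_le_two (hr j).le (by positivity) _ _
  have hgJ : a ^ s J ≤ |g J| := by
    simp only [g, abs_mul, hr, abs_of_pos (pow_pos ha0 _)]
    nlinarith [pow_pos ha0 (s J)]
  have hhead : ∑ j ∈ Finset.range J, |g j| ≤ 3 * π / (2 * (a * b - 1)) * a ^ s J := calc
    ∑ j ∈ Finset.range J, |g j| ≤ ∑ j ∈ Finset.range J, π * |y - x| * (a * b) ^ s j := by
        refine Finset.sum_le_sum fun j _ ↦ ?_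
        have := abs_mul_mul_cos_sub_cos_mul_le (hr j).le (pow_nonneg ha0.le (s j))
          (by positivity : 0 ≤ b ^ s j * π) x y
        refine this.trans_eq ?_
        rw [mul_pow]
        ring
    _ = π * |y - x| * ∑ j ∈ Finset.range J, (a * b) ^ s j := by rw [Finset.mul_sum]
    _ ≤ π * (3 / (2 * b ^ s J)) * ((a * b) ^ s J / (a * b - 1)) := by
        gcongr
        exact sum_range_pow_strictMono_le hab hs J
    _ = 3 * π / (2 * (a * b - 1)) * a ^ s J := by
        rw [mul_pow]
        field_simp
  have htail : ∑' j, |g (j + (J + 1))| ≤ 2 * a / (1 - a) * a ^ s J := by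
    refine (tsum_abs_nat_add_le_of_abs_le_pow ha0.le ha1 zero_le_two hs hg2 J).trans_eq ?_
    ring
  have := abs_sub_sum_range_sub_tsum_le_abs_tsum
    (summable_of_abs_le_pow_strictMono ha0.le ha1 hs hg2) J
  rw [lacunaryConst]
  linarith

theorem exists_near_le_abs_lacunary_slope {a b : ℝ} (ha0 : 0 < a) (ha1 : a < 1) (hab : 1 < a * b)
    {s : ℕ → ℕ} (hs : StrictMono s) {r : ℕ → ℝ} (hr : ∀ j, |r j| = 1) {x : ℝ}
    (hx : x ∈ Icc 0 1) (J : ℕ) :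
    ∃ y ∈ Icc (0 : ℝ) 1, y ≠ x ∧
      2 / 3 * lacunaryConst a b * (a * b) ^ s J ≤
        |(∑' j, r j * a ^ s j * (cos (b ^ s j * π * y) - cos (b ^ s j * π * x))) / (y - x)| := by
  obtain ⟨y, hy, hyx, hdist, hsum⟩ := exists_near_le_abs_lacunary_tsum ha0 ha1 hab hs hr hx J
  refine ⟨y, hy, hyx, ?_⟩
  have hbm : 0 < b ^ s J := pow_pos (by nlinarith) _
  rw [abs_div]
  calc 2 / 3 * lacunaryConst a b * (a * b) ^ s J
      = lacunaryConst a b * a ^ s J / (3 / (2 * b ^ s J)) := by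
        rw [mul_pow]
        field_simp
    _ ≤ |∑' j, r j * a ^ s j * (cos (b ^ s j * π * y) - cos (b ^ s j * π * x))| /
          (3 / (2 * b ^ s J)) := by gcongr
    _ ≤ _ := div_le_div_of_nonneg_left (abs_nonneg _) (abs_sub_pos.mpr hyx) hdist

/-- There exist `a ∈ (0,1)` and `b ∈ ℕ` such that for every `x ∈ (0,1]`, every strictly
increasing sequence `(s_j)` of positive integers and every `(r_j) ∈ {-1,1}^ℕ`, the expression
`|Σ_j r_j a^{s_j} (cos(b^{s_j} π y) − cos(b^{s_j} π x)) / (y − x)|` is unbounded as `y` ranges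
over `[0,1] \ {x}`. -/
theorem stmt6 : ∃ a ∈ Ioo (0:ℝ) 1, ∃ b : ℕ,
    ∀ x ∈ Ioc (0:ℝ) 1, ∀ s : ℕ → ℕ, StrictMono s → (∀ j, 0 < s j) →
    ∀ r : ℕ → ℝ, (∀ j, r j = -1 ∨ r j = 1) →
    ∀ B : ℝ, ∃ y ∈ Icc (0:ℝ) 1, y ≠ x ∧
      B < |(∑' j : ℕ, r j * a ^ s j *
              (Real.cos ((b : ℝ) ^ s j * π * y) - Real.cos ((b : ℝ) ^ s j * π * x))) /
            (y - x)| := by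
  refine ⟨1 / 14, ⟨by norm_num, by norm_num⟩, 147, ?_⟩
  intro x hx s hs _ r hr B
  have hab : 1 < 1 / 14 * ((147 : ℕ) : ℝ) := by norm_num
  have hκ : 0 < 2 / 3 * lacunaryConst (1 / 14) (147 : ℕ) := by
    norm_num [lacunaryConst]
    linarith [pi_lt_d2]
  have habs (j : ℕ) : |r j| = 1 := by rcases hr j with h | h <;> simp [h]
  obtain ⟨J, hJ⟩ := pow_unbounded_of_one_lt (B / _) hab
  obtain ⟨y, hy, hyx, hslope⟩ := exists_near_le_abs_lacunary_slope (by norm_num) (by norm_num) hab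
    hs habs (Ioc_subset_Icc_self hx) J
  refine ⟨y, hy, hyx, lt_of_lt_of_le ?_ hslope⟩
  calc B < _ * (1 / 14 * ((147 : ℕ) : ℝ)) ^ J := (div_lt_iff₀' hκ).mp hJ
    _ ≤ _ := by gcongr; exacts [hab.le, hs.le_apply]
end

section
/- Let a ∈ (0,1) and b be an odd positive integer with ab > 1 and 2/3 − 4a/(1−a) − π/(ab−1) > 0. Fix x ∈ (0,1], a strictly increasing sequence (s_j) of positive integers, and r_j ∈ {-1,1}. For m ∈ ℕ let w_m ∈ ℤ be such that x_m := x·b^{s_m} − w_m ∈ (−1/2, 1/2] and set y_m := (w_m − 1)/b^{s_m}. Then |Σ_{j=0}^{m-1} r_j a^{s_j}(cos(b^{s_j}π y_m) − cos(b^{s_j}π x))| / |y_m − x| ≤ π(ab)^{s_m}/(ab − 1). -/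
open Set Real

lemma cos_lip (u v : ℝ) : |Real.cos u - Real.cos v| ≤ |u - v| := by
  rw [Real.cos_sub_cos]
  have h1 : |Real.sin ((u + v) / 2)| ≤ 1 := Real.abs_sin_le_one _
  have h2 : |Real.sin ((u - v) / 2)| ≤ |(u - v) / 2| := Real.abs_sin_le_abs
  calc |(-2) * Real.sin ((u + v) / 2) * Real.sin ((u - v) / 2)|
      = 2 * (|Real.sin ((u + v) / 2)| * |Real.sin ((u - v) / 2)|) := by
        rw [abs_mul, abs_mul]; norm_num [mul_assoc]
    _ ≤ 2 * (1 * |(u - v) / 2|) := by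
        gcongr
    _ = |u - v| := by rw [one_mul, abs_div, abs_two]; ring

/-- The "low frequency" estimate: with `a ∈ (0,1)`, `b` odd, `ab > 1`,
`2/3 − 4a/(1−a) − π/(ab−1) > 0`, `x ∈ (0,1]`, `(s_j)` strictly increasing positive,
`r_j ∈ {-1,1}`, `w ∈ ℤ` with `x b^{s_m} − w ∈ (−1/2,1/2]` and `y_m = (w−1)/b^{s_m}`, one has
`|Σ_{j<m} r_j a^{s_j}(cos(b^{s_j}π y_m) − cos(b^{s_j}π x))| / |y_m − x| ≤ π(ab)^{s_m}/(ab−1)`. -/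
theorem stmt7 (a : ℝ) (ha : a ∈ Ioo (0:ℝ) 1) (b : ℕ) (hb : Odd b)
    (hab : 1 < a * (b : ℝ)) (hcond : 0 < 2/3 - 4*a/(1-a) - π/(a * (b : ℝ) - 1))
    (x : ℝ) (hx : x ∈ Ioc (0:ℝ) 1)
    (s : ℕ → ℕ) (hs : StrictMono s) (hs' : ∀ j, 0 < s j)
    (r : ℕ → ℝ) (hr : ∀ j, r j = -1 ∨ r j = 1)
    (m : ℕ) (w : ℤ) (hw : x * (b : ℝ) ^ s m - (w : ℝ) ∈ Ioc (-(1/2) : ℝ) (1/2)) :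
    |∑ j ∈ Finset.range m, r j * a ^ s j *
        (Real.cos ((b : ℝ) ^ s j * π * (((w : ℝ) - 1) / (b : ℝ) ^ s m)) -
          Real.cos ((b : ℝ) ^ s j * π * x))| /
      |((w : ℝ) - 1) / (b : ℝ) ^ s m - x| ≤ π * (a * (b : ℝ)) ^ s m / (a * (b : ℝ) - 1) := by
  have hb1 : (1:ℝ) < b := by
    rcases lt_or_ge 1 (b:ℝ) with h | h
    · exact h
    · exfalso; nlinarith [ha.2, ha.1]
  have hb0 : (0:ℝ) < b := by linarith
  set y : ℝ := ((w : ℝ) - 1) / (b : ℝ) ^ s m with hy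
  have hbm : (0:ℝ) < (b:ℝ) ^ s m := pow_pos hb0 _
  have hyx : y < x := by
    rw [hy, div_lt_iff₀ hbm]
    have := hw.1
    linarith
  have hyx0 : 0 < |y - x| := abs_pos.mpr (sub_ne_zero.mpr (ne_of_lt hyx))
  rw [div_le_iff₀ hyx0]
  -- bound each term
  have key : |∑ j ∈ Finset.range m, r j * a ^ s j *
        (Real.cos ((b : ℝ) ^ s j * π * y) - Real.cos ((b : ℝ) ^ s j * π * x))|
      ≤ (∑ j ∈ Finset.range m, π * (a * b) ^ s j) * |y - x| := by
    rw [Finset.sum_mul]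
    refine (Finset.abs_sum_le_sum_abs _ _).trans (Finset.sum_le_sum fun j _ => ?_)
    have hrj : |r j| = 1 := by rcases hr j with h | h <;> simp [h]
    rw [abs_mul, abs_mul, hrj, one_mul, abs_pow, abs_of_pos ha.1]
    have hc : |Real.cos ((b : ℝ) ^ s j * π * y) - Real.cos ((b : ℝ) ^ s j * π * x)|
        ≤ (b:ℝ) ^ s j * π * |y - x| := by
      refine (cos_lip _ _).trans ?_
      rw [← mul_sub, abs_mul,
        abs_of_nonneg (mul_nonneg (pow_nonneg hb0.le _) Real.pi_pos.le)]
    calc a ^ s j * |Real.cos ((b : ℝ) ^ s j * π * y) - Real.cos ((b : ℝ) ^ s j * π * x)|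
        ≤ a ^ s j * ((b:ℝ) ^ s j * π * |y - x|) :=
          mul_le_mul_of_nonneg_left hc (pow_nonneg ha.1.le _)
      _ = π * (a * b) ^ s j * |y - x| := by rw [mul_pow]; ring
  refine key.trans ?_
  gcongr
  -- sum of (ab)^{s_j} over j < m ≤ (ab)^{s_m}/(ab-1)
  have hab0 : (0:ℝ) < a * b := by linarith
  have hsum : ∑ j ∈ Finset.range m, (a * (b:ℝ)) ^ s j ≤ ∑ k ∈ Finset.range (s m), (a * (b:ℝ)) ^ k := by
    rw [show (∑ j ∈ Finset.range m, (a * (b:ℝ)) ^ s j)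
        = ∑ k ∈ (Finset.range m).image s, (a * (b:ℝ)) ^ k from
      (Finset.sum_image (fun i _ j _ h => hs.injective h)).symm]
    refine Finset.sum_le_sum_of_subset_of_nonneg ?_ (fun k _ _ => by positivity)
    intro k hk
    simp only [Finset.mem_image, Finset.mem_range] at hk ⊢
    obtain ⟨j, hj, rfl⟩ := hk
    exact hs hj
  calc ∑ j ∈ Finset.range m, π * (a * (b:ℝ)) ^ s j
      = π * ∑ j ∈ Finset.range m, (a * (b:ℝ)) ^ s j := by rw [Finset.mul_sum]
    _ ≤ π * (((a * (b:ℝ)) ^ s m - 1) / (a * (b:ℝ) - 1)) :=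
        mul_le_mul_of_nonneg_left
          (by rw [← geom_sum_eq (ne_of_gt hab)]; exact hsum) Real.pi_pos.le
    _ ≤ π * (a * (b:ℝ)) ^ s m / (a * (b:ℝ) - 1) := by
        rw [mul_div_assoc]
        have h1 : (0:ℝ) < a * (b:ℝ) - 1 := by linarith
        refine mul_le_mul_of_nonneg_left ?_ Real.pi_pos.le
        gcongr
        linarith
end

section
/- With the notation of the Cantor approximation sequence: if d_{2k-1} = d_{2k} + 3^{-i_k}, d_{2k} = d_{2k+1} + 3^{-i_k}, and d_{2k}, d_{2k+1} > c, then d_{2k} + (3^{-(i_k-1)} + 3^{-(i_k+1)})/2 > c + (d_{2k-1} − c)/4 and d_{2k+1} + (3^{-(i_k-1)} + 3^{-(i_k+1)})/2 > c + (d_{2k} − c)/4. -/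
/-- The key elementary inequality: if `d_{2k-1} = d_{2k} + 3^{-i}`, `d_{2k} = d_{2k+1} + 3^{-i}`
and `d_{2k}, d_{2k+1} > c`, then
`d_{2k} + (3^{-(i-1)} + 3^{-(i+1)})/2 > c + (d_{2k-1} − c)/4` and
`d_{2k+1} + (3^{-(i-1)} + 3^{-(i+1)})/2 > c + (d_{2k} − c)/4`. -/
theorem stmt11 (c d1 d2 d3 : ℝ) (i : ℕ) (hi : 1 ≤ i)
    (h1 : d1 = d2 + 1 / 3 ^ i) (h2 : d2 = d3 + 1 / 3 ^ i)
    (h3 : c < d2) (h4 : c < d3) :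
    d2 + (1 / (3:ℝ) ^ (i - 1) + 1 / (3:ℝ) ^ (i + 1)) / 2 > c + (d1 - c) / 4 ∧
    d3 + (1 / (3:ℝ) ^ (i - 1) + 1 / (3:ℝ) ^ (i + 1)) / 2 > c + (d2 - c) / 4 := by
  obtain ⟨j, rfl⟩ : ∃ j, i = j + 1 := ⟨i - 1, (Nat.succ_pred_eq_of_pos hi).symm⟩
  have hx : (0:ℝ) < 3 ^ j := by positivity
  simp only [Nat.add_sub_cancel] at *
  subst h1 h2
  simp only [pow_succ] at *
  constructor <;> rw [gt_iff_lt, ← sub_pos] <;>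
    · have h3' := sub_pos.mpr h3
      have h4' := sub_pos.mpr h4
      field_simp
      nlinarith [mul_pos hx h3', mul_pos hx h4', mul_pos (mul_pos hx hx) h3', mul_pos (mul_pos hx hx) h4']
end

section
/- For each n ∈ ℕ, the set E_n ⊆ C([0,1]^2) of functions f for which there exist (x,y) ∈ [0, 1 − 1/(n+1)]^2 and a unit vector v = (v_1,v_2) with v_1 ∈ [1/(n+1), 1] such that |f((x,y) + hv) − f(x,y)| ≤ n·h for all h ∈ (0, 1/n), is nowhere dense: for every piecewise linear g ∈ C([0,1]^2) and every ε > 0, the function f(x,y) = g(x,y) + (ε/2)·dist(mx, ℤ) satisfies ‖f − g‖ < ε and f ∉ E_n, for any m ∈ ℕ with (m/(n+1))·(ε/2) > M + n where M bounds the slopes of g. -/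
open Set

lemma key_saw (t : ℝ) : ∃ δm > 0, ∀ δ ∈ Set.Ioc (0:ℝ) δm,
    |(|(t + δ) - (round (t + δ) : ℝ)|) - (|t - (round t : ℝ)|)| = δ := by
  have h0 := Int.fract_nonneg t
  have h1 := Int.fract_lt_one t
  set u := Int.fract t with hu
  have hsplit : t = (⌊t⌋ : ℝ) + u := by rw [hu]; exact (Int.floor_add_fract t).symm
  by_cases hcase : u < 1/2
  · refine ⟨1/2 - u, by linarith, fun δ ⟨hδ0, hδm⟩ => ?_⟩
    have hfr : Int.fract (t + δ) = u + δ := by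
      rw [hsplit, add_assoc, Int.fract_intCast_add, Int.fract_eq_self.2 ⟨by linarith, by linarith⟩]
    rw [abs_sub_round_eq_min, abs_sub_round_eq_min, hfr, ← hu]
    rw [min_eq_left (by linarith), min_eq_left (by linarith)]
    rw [abs_of_nonneg (by linarith)]; ring
  · push_neg at hcase
    refine ⟨1 - u, by linarith, fun δ ⟨hδ0, hδm⟩ => ?_⟩
    rcases eq_or_lt_of_le hδm with heq | hlt
    · have : t + δ = ((⌊t⌋ + 1 : ℤ) : ℝ) := by push_cast; linarith [hsplit]
      rw [abs_sub_round_eq_min t, this]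
      simp only [round_intCast]
      rw [sub_self, abs_zero, min_eq_right (by linarith), ← hu]
      rw [zero_sub, abs_neg, abs_of_nonneg (by linarith)]; linarith
    · have hfr : Int.fract (t + δ) = u + δ := by
        rw [hsplit, add_assoc, Int.fract_intCast_add, Int.fract_eq_self.2 ⟨by linarith, by linarith⟩]
      rw [abs_sub_round_eq_min, abs_sub_round_eq_min, hfr, ← hu]
      rw [min_eq_right (by linarith), min_eq_right (by linarith)]
      rw [abs_of_nonpos (by linarith)]; ring

/-- `E_n` is nowhere dense, via the explicit construction: if `g` has slopes bounded by `M`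
and `(m/(n+1))·(ε/2) > M + n`, then `f(x,y) = g(x,y) + (ε/2)·dist(mx,ℤ)` satisfies
`‖f − g‖ < ε` and `f ∉ E_n`. -/
theorem stmt17 (n : ℕ) (hn : 1 ≤ n) (g : ℝ → ℝ → ℝ) (M : ℝ) (hM : 0 ≤ M)
    (hg : ∀ x y x' y' : ℝ, |g x y - g x' y'| ≤ M * Real.sqrt ((x - x') ^ 2 + (y - y') ^ 2))
    (ε : ℝ) (hε : 0 < ε) (m : ℕ)
    (hm : M + n < ((m : ℝ) / (n + 1)) * (ε / 2)) :
    (∀ x y : ℝ,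
      |(g x y + ε / 2 * |(m : ℝ) * x - (round ((m : ℝ) * x) : ℝ)|) - g x y| < ε) ∧
    ¬ ∃ x y : ℝ, x ∈ Icc (0:ℝ) (1 - 1/(n+1)) ∧ y ∈ Icc (0:ℝ) (1 - 1/(n+1)) ∧
      ∃ v1 v2 : ℝ, v1 ^ 2 + v2 ^ 2 = 1 ∧ v1 ∈ Icc (1/(n+1) : ℝ) 1 ∧
        ∀ h ∈ Ioo (0:ℝ) (1/n),
          |(g (x + h * v1) (y + h * v2) +
              ε / 2 * |(m : ℝ) * (x + h * v1) - (round ((m : ℝ) * (x + h * v1)) : ℝ)|) -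
            (g x y + ε / 2 * |(m : ℝ) * x - (round ((m : ℝ) * x) : ℝ)|)| ≤ (n : ℝ) * h := by
  have hn1 : (1:ℝ) ≤ (n:ℝ) := by exact_mod_cast hn
  constructor
  · intro x y
    have hd := abs_sub_round ((m : ℝ) * x)
    have hd0 : (0:ℝ) ≤ |(m : ℝ) * x - (round ((m : ℝ) * x) : ℝ)| := abs_nonneg _
    have : |(g x y + ε / 2 * |(m : ℝ) * x - (round ((m : ℝ) * x) : ℝ)|) - g x y|
        = ε / 2 * |(m : ℝ) * x - (round ((m : ℝ) * x) : ℝ)| := by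
      rw [add_sub_cancel_left, abs_of_nonneg (by positivity)]
    rw [this]; nlinarith
  · rintro ⟨x, y, hx, hy, v1, v2, hv, hv1, hall⟩
    have hnp : (0:ℝ) < (n:ℝ) + 1 := by linarith
    have hv1pos : 0 < v1 := lt_of_lt_of_le (by positivity) hv1.1
    have hmpos : (0:ℝ) < (m:ℝ) := by
      by_contra hc
      push_neg at hc
      nlinarith [div_nonpos_of_nonpos_of_nonneg hc hnp.le]
    set t := (m : ℝ) * x with ht
    obtain ⟨δm, hδm0, hkey⟩ := key_saw t
    set δ := min δm ((m : ℝ) * v1 / (2 * n)) with hδ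
    have hδ0 : 0 < δ := lt_min hδm0 (by positivity)
    set h := δ / ((m : ℝ) * v1) with hh
    have hh0 : 0 < h := by positivity
    have hhδ : (m : ℝ) * v1 * h = δ := by
      rw [hh]; field_simp
    have hhlt : h < 1 / n := by
      have h1 : h ≤ ((m : ℝ) * v1 / (2 * n)) / ((m : ℝ) * v1) :=
        div_le_div_of_nonneg_right (min_le_right _ _) (by positivity)
      have h2 : ((m : ℝ) * v1 / (2 * n)) / ((m : ℝ) * v1) = 1 / (2 * n) := by
        field_simp
      have : (1 : ℝ) / (2 * n) < 1 / n := by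
        apply div_lt_div_of_pos_left one_pos (by positivity); linarith
      linarith [h2 ▸ h1]
    have hsaw := hkey δ ⟨hδ0, min_le_left _ _⟩
    have hmain := hall h ⟨hh0, hhlt⟩
    -- rewrite m*(x + h*v1) = t + δ
    have harg : (m : ℝ) * (x + h * v1) = t + δ := by rw [ht, ← hhδ]; ring
    rw [harg] at hmain
    -- bound on g difference
    have hgb : |g (x + h * v1) (y + h * v2) - g x y| ≤ M * h := by
      have := hg (x + h * v1) (y + h * v2) x y
      have hs : Real.sqrt ((x + h * v1 - x) ^ 2 + (y + h * v2 - y) ^ 2) = h := by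
        have : (x + h * v1 - x) ^ 2 + (y + h * v2 - y) ^ 2 = h ^ 2 := by
          have : (x + h * v1 - x) ^ 2 + (y + h * v2 - y) ^ 2 = h ^ 2 * (v1 ^ 2 + v2 ^ 2) := by
            ring
          rw [this, hv]; ring
        rw [this, Real.sqrt_sq hh0.le]
      rw [hs] at this; exact this
    set d1 := |(t + δ) - (round (t + δ) : ℝ)| with hd1
    set d0 := |t - (round t : ℝ)| with hd0
    -- from hmain and hgb : ε/2 * δ ≤ (M + n) * h
    have hcomb : ε / 2 * δ ≤ (M + n) * h := by
      have h1 : |ε / 2 * (d1 - d0)| ≤ M * h + n * h := by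
        have h2 : ε / 2 * (d1 - d0) =
            (g (x + h * v1) (y + h * v2) + ε / 2 * d1 - (g x y + ε / 2 * d0))
            - (g (x + h * v1) (y + h * v2) - g x y) := by ring
        rw [h2]
        calc _ ≤ |g (x + h * v1) (y + h * v2) + ε / 2 * d1 - (g x y + ε / 2 * d0)|
              + |g (x + h * v1) (y + h * v2) - g x y| := abs_sub _ _
          _ ≤ (n : ℝ) * h + M * h := add_le_add hmain hgb
          _ = M * h + n * h := by ring
      have h3 : |ε / 2 * (d1 - d0)| = ε / 2 * δ := by
        rw [abs_mul, abs_of_nonneg (by positivity : (0:ℝ) ≤ ε / 2), hsaw]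
      linarith [h3 ▸ h1]
    -- derive contradiction
    have hδh : δ = (m : ℝ) * v1 * h := hhδ.symm
    rw [hδh] at hcomb
    have hfin : ε / 2 * ((m : ℝ) * v1) ≤ M + n := by
      nlinarith
    have hv1lb : 1 / ((n : ℝ) + 1) ≤ v1 := hv1.1
    have h4 : (1:ℝ) ≤ v1 * ((n:ℝ) + 1) := by
      rw [div_le_iff₀ hnp] at hv1lb; linarith
    have h5 := mul_le_mul_of_nonneg_left h4 (show (0:ℝ) ≤ ε / 2 * (m:ℝ) by positivity)
    have : ((m : ℝ) / (n + 1)) * (ε / 2) ≤ ε / 2 * ((m : ℝ) * v1) := by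
      rw [div_mul_eq_mul_div, div_le_iff₀ hnp]
      linarith
    linarith
end

section
/- The set of nowhere differentiable functions on [0,1]^2 — continuous functions having no finite one-sided directional derivative at any point along any unit vector — is comeager in C([0,1]^2). -/
/-!
Fix a linear functional `ℓ` on the plane and the compact set of directions `v` with `‖v‖ ≤ 1`
and `|ℓ v| ≥ 1/2`; every Euclidean unit vector lies in such a set for `ℓ` one of the two
coordinate projections. The functions admitting, at some point and along some such direction,
difference quotients bounded by `c` on the steps `0 < h ≤ a` form a closed set (the direction
ranges over a compact set). It has empty interior: adding to any `f` a small multiple of the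
sawtooth `q ↦ dist (N ℓ q) ℤ` with `N` large creates, at every point and along every such
direction, a jump of size comparable to the amplitude within a step of order `1 / N`, which
neither the uniformly continuous `f` nor a slope bound `c` can compensate. A function with a
finite one-sided directional derivative has bounded difference quotients near `0`, so the
complement of the set in the theorem is covered by countably many of these nowhere dense sets.
-/

open Set Filter Topology

noncomputable section

namespace NowhereDifferentiable

def sawtooth (t : ℝ) : ℝ := ‖(t : UnitAddCircle)‖

lemma continuous_sawtooth : Continuous sawtooth :=
  continuous_norm.comp (AddCircle.continuous_mk' 1)

lemma sawtooth_nonneg (t : ℝ) : 0 ≤ sawtooth t := norm_nonneg _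

lemma sawtooth_le_half (t : ℝ) : sawtooth t ≤ 1 / 2 := by
  simpa [sawtooth] using
    AddCircle.norm_le_half_period (p := (1 : ℝ)) (x := (t : UnitAddCircle)) one_ne_zero

lemma sawtooth_neg (t : ℝ) : sawtooth (-t) = sawtooth t := by
  rw [sawtooth, AddCircle.coe_neg, norm_neg, sawtooth]

lemma sawtooth_intCast (m : ℤ) : sawtooth m = 0 := by
  simp [sawtooth, UnitAddCircle.norm_eq]

lemma sawtooth_intCast_add_half (m : ℤ) : sawtooth (m + 1 / 2) = 1 / 2 := by
  have hm : ((m : ℝ) : UnitAddCircle) = 0 := by simp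
  rw [sawtooth, AddCircle.coe_add, hm, zero_add]
  simpa using AddCircle.norm_half_period_eq (p := (1 : ℝ))

/-- The next integer works if `sawtooth t ≥ 1/4`, the next half-integer otherwise. -/
lemma exists_mem_Ioc_abs_sawtooth_sub_ge (t : ℝ) :
    ∃ w ∈ Ioc t (t + 1), 1 / 4 ≤ |sawtooth w - sawtooth t| := by
  rcases le_or_gt (1 / 4) (sawtooth t) with ht | ht
  · refine ⟨⌊t⌋ + 1, ⟨Int.lt_floor_add_one t, by linarith [Int.floor_le t]⟩, ?_⟩
    have hw : sawtooth (⌊t⌋ + 1 : ℤ) = 0 := sawtooth_intCast _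
    push_cast at hw
    rwa [hw, zero_sub, abs_neg, abs_of_nonneg (sawtooth_nonneg t)]
  · refine ⟨⌊t + 1 / 2⌋ + 1 / 2, ⟨by linarith [Int.lt_floor_add_one (t + 1 / 2)],
      by linarith [Int.floor_le (t + 1 / 2)]⟩, ?_⟩
    rw [sawtooth_intCast_add_half, abs_of_pos (by linarith)]
    linarith

lemma exists_abs_sawtooth_add_mul_sub_ge (t : ℝ) {u : ℝ} (hu : 1 / 2 ≤ |u|) :
    ∃ τ ∈ Ioc (0 : ℝ) 2, 1 / 4 ≤ |sawtooth (t + τ * u) - sawtooth t| := by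
  wlog hu₀ : 0 < u generalizing t u
  · obtain ⟨τ, hτ, hjump⟩ := this (-t) (u := -u) (by rwa [abs_neg]) (by
      rcases abs_cases u with ⟨_, _⟩ | ⟨_, _⟩ <;> linarith)
    refine ⟨τ, hτ, ?_⟩
    rwa [← sawtooth_neg, ← sawtooth_neg t, show -(t + τ * u) = -t + τ * -u by ring]
  obtain ⟨w, ⟨htw, hwt⟩, hjump⟩ := exists_mem_Ioc_abs_sawtooth_sub_ge t
  rw [abs_of_pos hu₀] at hu
  refine ⟨(w - t) / u, ⟨div_pos (by linarith) hu₀, ?_⟩, ?_⟩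
  · rw [div_le_iff₀ hu₀]
    linarith
  · rwa [div_mul_cancel₀ _ hu₀.ne', add_sub_cancel]

abbrev Square := Icc (0 : ℝ) 1 × Icc (0 : ℝ) 1

def unitSquare : Set (ℝ × ℝ) := Icc 0 1 ×ˢ Icc 0 1

def toPlane (p : Square) : ℝ × ℝ := (p.1, p.2)

/-- The nearest-point retraction of the plane onto the square; it lets points `p + h • v` be
fed to a function on the square without a membership proof. -/
def clamp (x : ℝ × ℝ) : Square := (projIcc 0 1 zero_le_one x.1, projIcc 0 1 zero_le_one x.2)

@[fun_prop]
lemma continuous_toPlane : Continuous toPlane := by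
  unfold toPlane
  fun_prop

@[fun_prop]
lemma continuous_clamp : Continuous clamp :=
  (continuous_projIcc.comp continuous_fst).prodMk (continuous_projIcc.comp continuous_snd)

lemma isometry_toPlane : Isometry toPlane := Isometry.of_dist_eq fun _ _ => rfl

lemma toPlane_mem_unitSquare (p : Square) : toPlane p ∈ unitSquare := ⟨p.1.2, p.2.2⟩

lemma clamp_of_mem {x : ℝ × ℝ} (hx : x ∈ unitSquare) : clamp x = (⟨x.1, hx.1⟩, ⟨x.2, hx.2⟩) :=
  Prod.ext (projIcc_of_mem zero_le_one hx.1) (projIcc_of_mem zero_le_one hx.2)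

lemma toPlane_clamp_of_mem {x : ℝ × ℝ} (hx : x ∈ unitSquare) : toPlane (clamp x) = x := by
  rw [clamp_of_mem hx]
  rfl

lemma add_smul_mem_unitSquare {x v : ℝ × ℝ} {a h : ℝ} (hx : x ∈ unitSquare)
    (hxa : x + a • v ∈ unitSquare) (hh : h ∈ Ioc 0 a) : x + h • v ∈ unitSquare := by
  have ha : 0 < a := hh.1.trans_le hh.2
  have hmem := ((convex_Icc (0 : ℝ) 1).prod (convex_Icc (0 : ℝ) 1)).add_smul_mem hx hxa
    (t := h / a) ⟨div_nonneg hh.1.le ha.le, (div_le_one ha).2 hh.2⟩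
  rwa [smul_smul, div_mul_cancel₀ _ ha.ne'] at hmem

lemma dist_clamp_add_smul_le {p : Square} {v : ℝ × ℝ} {a h : ℝ} (hv : ‖v‖ ≤ 1)
    (hpa : toPlane p + a • v ∈ unitSquare) (hh : h ∈ Ioc 0 a) :
    dist (clamp (toPlane p + h • v)) p ≤ h := by
  rw [← isometry_toPlane.dist_eq,
    toPlane_clamp_of_mem (add_smul_mem_unitSquare (toPlane_mem_unitSquare p) hpa hh),
    dist_self_add_left, norm_smul, Real.norm_of_nonneg hh.1.le]
  exact mul_le_of_le_one_right hh.1.le hv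

/-- `clamp` is inert on these steps, as the segment from `p` to `p + a • v` lies in the square. -/
def slopeBounded (D : Set (ℝ × ℝ)) (a c : ℝ) : Set C(Square, ℝ) :=
  {f | ∃ p : Square, ∃ v ∈ D, toPlane p + a • v ∈ unitSquare ∧
    ∀ h ∈ Ioc 0 a, |f (clamp (toPlane p + h • v)) - f p| ≤ c * h}

lemma isClosed_slopeBounded {D : Set (ℝ × ℝ)} (hD : IsCompact D) (a c : ℝ) :
    IsClosed (slopeBounded D a c) := by
  have : CompactSpace D := isCompact_iff_compactSpace.mp hD
  let B : Set (C(Square, ℝ) × (Square × D)) :=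
    {z | toPlane z.2.1 + a • (z.2.2 : ℝ × ℝ) ∈ unitSquare} ∩ ⋂ h ∈ Ioc 0 a,
      {z | |z.1 (clamp (toPlane z.2.1 + h • (z.2.2 : ℝ × ℝ))) - z.1 z.2.1| ≤ c * h}
  have hB : IsClosed B :=
    ((isClosed_Icc.prod isClosed_Icc).preimage (by fun_prop)).inter
      (isClosed_biInter fun h _ => isClosed_le (by fun_prop) continuous_const)
  have hfst : slopeBounded D a c = Prod.fst '' B := by
    ext f
    constructor
    · rintro ⟨p, v, hv, hpa, hbound⟩
      exact ⟨(f, p, ⟨v, hv⟩), ⟨hpa, mem_iInter₂.2 hbound⟩, rfl⟩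
    · rintro ⟨⟨f, p, v⟩, ⟨hpa, hbound⟩, rfl⟩
      exact ⟨p, v, v.2, hpa, mem_iInter₂.1 hbound⟩
  rw [hfst]
  exact isClosedMap_fst_of_compactSpace B hB

def directionsAlong (ℓ : ℝ × ℝ →L[ℝ] ℝ) : Set (ℝ × ℝ) := {v | ‖v‖ ≤ 1 ∧ 1 / 2 ≤ |ℓ v|}

lemma isCompact_directionsAlong (ℓ : ℝ × ℝ →L[ℝ] ℝ) : IsCompact (directionsAlong ℓ) :=
  (isCompact_closedBall (0 : ℝ × ℝ) 1).of_isClosed_subset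
    ((isClosed_le continuous_norm continuous_const).inter
      (isClosed_le continuous_const (continuous_abs.comp ℓ.continuous)))
    fun _ hv => mem_closedBall_zero_iff.2 hv.1

lemma mem_directionsAlong_fst_or_snd {v : ℝ × ℝ} (hv : v.1 ^ 2 + v.2 ^ 2 = 1) :
    v ∈ directionsAlong (.fst ℝ ℝ ℝ) ∨ v ∈ directionsAlong (.snd ℝ ℝ ℝ) := by
  have h₁ : |v.1| ≤ 1 := (sq_le_one_iff_abs_le_one _).1 (by nlinarith)
  have h₂ : |v.2| ≤ 1 := (sq_le_one_iff_abs_le_one _).1 (by nlinarith)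
  have hnorm : ‖v‖ ≤ 1 := by
    rw [Prod.norm_def]
    exact max_le h₁ h₂
  by_contra! hsmall
  have hs₁ : |v.1| < 1 / 2 := lt_of_not_ge fun h => hsmall.1 ⟨hnorm, h⟩
  have hs₂ : |v.2| < 1 / 2 := lt_of_not_ge fun h => hsmall.2 ⟨hnorm, h⟩
  nlinarith [sq_abs v.1, sq_abs v.2, abs_nonneg v.1, abs_nonneg v.2]

def sawtoothAlong (ℓ : ℝ × ℝ →L[ℝ] ℝ) (N : ℝ) : C(Square, ℝ) :=
  ⟨fun q => sawtooth (N * ℓ (toPlane q)), continuous_sawtooth.comp (by fun_prop)⟩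

lemma norm_sawtoothAlong_le (ℓ : ℝ × ℝ →L[ℝ] ℝ) (N : ℝ) : ‖sawtoothAlong ℓ N‖ ≤ 1 / 2 :=
  (ContinuousMap.norm_le _ (by norm_num)).2 fun q => by
    change ‖sawtooth _‖ ≤ _
    rw [Real.norm_of_nonneg (sawtooth_nonneg _)]
    exact sawtooth_le_half _

lemma exists_abs_sawtoothAlong_sub_ge (ℓ : ℝ × ℝ →L[ℝ] ℝ) {N a : ℝ} (hN : 0 < N)
    (hNa : 2 / N ≤ a) {p : Square} {v : ℝ × ℝ} (hℓv : 1 / 2 ≤ |ℓ v|)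
    (hpa : toPlane p + a • v ∈ unitSquare) :
    ∃ h ∈ Ioc 0 (2 / N),
      1 / 4 ≤ |sawtoothAlong ℓ N (clamp (toPlane p + h • v)) - sawtoothAlong ℓ N p| := by
  obtain ⟨τ, ⟨hτ, hτ2⟩, hjump⟩ := exists_abs_sawtooth_add_mul_sub_ge (N * ℓ (toPlane p)) hℓv
  have hh : τ / N ∈ Ioc 0 (2 / N) := ⟨div_pos hτ hN, div_le_div_of_nonneg_right hτ2 hN.le⟩
  refine ⟨τ / N, hh, ?_⟩
  change 1 / 4 ≤ |sawtooth (N * ℓ (toPlane (clamp _))) - sawtooth (N * ℓ (toPlane p))|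
  rwa [toPlane_clamp_of_mem (add_smul_mem_unitSquare (toPlane_mem_unitSquare p) hpa
    ⟨hh.1, hh.2.trans hNa⟩), map_add, map_smul, smul_eq_mul, mul_add, ← mul_assoc,
    mul_div_cancel₀ _ hN.ne']

/-- For `N` large, a step `h ≤ 2 / N` is too short for `f` to move by more than `ε / 16` or for
the slope bound to allow more than `ε / 8`, while the sawtooth term can be made to jump by
`ε / 4`. -/
lemma eventually_add_smul_sawtoothAlong_notMem (ℓ : ℝ × ℝ →L[ℝ] ℝ) (f : C(Square, ℝ))
    {ε : ℝ} (hε : 0 < ε) {a : ℝ} (ha : 0 < a) (c : ℝ) :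
    ∀ᶠ N in atTop, f + ε • sawtoothAlong ℓ N ∉ slopeBounded (directionsAlong ℓ) a c := by
  obtain ⟨η, hη, hf⟩ := Metric.uniformContinuous_iff.mp
    (CompactSpace.uniformContinuous_of_continuous f.continuous) (ε / 16) (by positivity)
  have hlarge : ∀ᶠ N : ℝ in atTop, 0 < N ∧ 2 / N < min a η ∧ 2 * |c| / N < ε / 8 :=
    (eventually_gt_atTop 0).and <|
      ((tendsto_const_nhds.div_atTop tendsto_id).eventually (gt_mem_nhds (lt_min ha hη))).and
      ((tendsto_const_nhds.div_atTop tendsto_id).eventually (gt_mem_nhds (by positivity)))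
  filter_upwards [hlarge] with N ⟨hN, hNaη, hNc⟩
  rintro ⟨p, v, ⟨hv, hℓv⟩, hpa, hbound⟩
  obtain ⟨hNa, hNη⟩ := lt_min_iff.1 hNaη
  obtain ⟨h, hh, hjump⟩ := exists_abs_sawtoothAlong_sub_ge ℓ hN hNa.le hℓv hpa
  have hha : h ∈ Ioc 0 a := ⟨hh.1, hh.2.trans hNa.le⟩
  set q := clamp (toPlane p + h • v)
  set s := sawtoothAlong ℓ N
  have hfq : |f q - f p| < ε / 16 :=
    hf (((dist_clamp_add_smul_le hv hpa hha).trans hh.2).trans_lt hNη)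
  have hch : c * h < ε / 8 :=
    calc c * h ≤ |c| * (2 / N) := mul_le_mul (le_abs_self c) hh.2 hh.1.le (abs_nonneg c)
      _ = 2 * |c| / N := by ring
      _ < ε / 8 := hNc
  have hgap : ε / 4 ≤ |(f + ε • s) q - (f + ε • s) p| + |f q - f p| :=
    calc ε / 4 ≤ ε * |s q - s p| := by linarith [mul_le_mul_of_nonneg_left hjump hε.le]
      _ = |((f + ε • s) q - (f + ε • s) p) - (f q - f p)| := by
          simp only [ContinuousMap.add_apply, ContinuousMap.smul_apply, smul_eq_mul]
          rw [show f q + ε * s q - (f p + ε * s p) - (f q - f p) = ε * (s q - s p) by ring,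
            abs_mul, abs_of_pos hε]
      _ ≤ |(f + ε • s) q - (f + ε • s) p| + |f q - f p| := abs_sub _ _
  linarith [hbound h hha]

lemma dense_compl_slopeBounded (ℓ : ℝ × ℝ →L[ℝ] ℝ) {a : ℝ} (ha : 0 < a) (c : ℝ) :
    Dense (slopeBounded (directionsAlong ℓ) a c)ᶜ := by
  refine Metric.dense_iff.2 fun f ε hε => ?_
  obtain ⟨N, hN⟩ := (eventually_add_smul_sawtoothAlong_notMem ℓ f (half_pos hε) ha c).exists
  refine ⟨f + (ε / 2) • sawtoothAlong ℓ N, ?_, hN⟩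
  rw [Metric.mem_ball, dist_eq_norm, add_sub_cancel_left, norm_smul,
    Real.norm_of_nonneg (half_pos hε).le]
  nlinarith [norm_sawtoothAlong_le ℓ N]

lemma isNowhereDense_slopeBounded (ℓ : ℝ × ℝ →L[ℝ] ℝ) {a : ℝ} (ha : 0 < a) (c : ℝ) :
    IsNowhereDense (slopeBounded (directionsAlong ℓ) a c) :=
  (isClosed_slopeBounded (isCompact_directionsAlong ℓ) a c).isNowhereDense_iff.2 <|
    interior_eq_empty_iff_dense_compl.2 (dense_compl_slopeBounded ℓ ha c)

lemma eventually_abs_le_mul_of_tendsto_div {φ : ℝ → ℝ} {L : ℝ}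
    (hφ : Tendsto (fun h => φ h / h) (𝓝[>] 0) (𝓝 L)) :
    ∀ᶠ n : ℕ in atTop, ∀ h ∈ Ioc (0 : ℝ) (1 / (n + 1)), |φ h| ≤ (n + 1) * h := by
  obtain ⟨δ, hδ : 0 < δ, hφδ⟩ := mem_nhdsGT_iff_exists_Ioo_subset.1
    (hφ.abs.eventually (ge_mem_nhds (lt_add_one |L|)))
  filter_upwards [tendsto_one_div_add_atTop_nhds_zero_nat.eventually (gt_mem_nhds hδ),
    tendsto_natCast_atTop_atTop.eventually_ge_atTop |L|] with n hnδ hnL h ⟨hh, hhn⟩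
  calc |φ h| = |φ h / h| * h := by rw [abs_div, abs_of_pos hh, div_mul_cancel₀ _ hh.ne']
    _ ≤ (|L| + 1) * h := by
        gcongr
        exact hφδ ⟨hh, hhn.trans_lt hnδ⟩
    _ ≤ (n + 1) * h := by gcongr

lemma exists_mem_slopeBounded_of_tendsto {f : C(Square, ℝ)} {p : Square} {v : ℝ × ℝ}
    {D : Set (ℝ × ℝ)} (hv : v ∈ D) {h₀ : ℝ} (hh₀ : 0 < h₀)
    (hmem : toPlane p + h₀ • v ∈ unitSquare) {L : ℝ}
    (hφ : Tendsto (fun h => (f (clamp (toPlane p + h • v)) - f p) / h) (𝓝[>] 0) (𝓝 L)) :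
    ∃ n : ℕ, f ∈ slopeBounded D (1 / (n + 1)) (n + 1) := by
  obtain ⟨n, hbound, hn⟩ := ((eventually_abs_le_mul_of_tendsto_div hφ).and
    (tendsto_one_div_add_atTop_nhds_zero_nat.eventually (ge_mem_nhds hh₀))).exists
  exact ⟨n, p, v, hv, add_smul_mem_unitSquare (toPlane_mem_unitSquare p) hmem
    ⟨by positivity, hn⟩, hbound⟩

end NowhereDifferentiable

open NowhereDifferentiable in
/-- The set of nowhere differentiable functions on `[0,1]²` — continuous functions having no
finite one-sided directional derivative at any point along any unit vector (along which the
square is approachable) — is comeager in `C([0,1]²)`. -/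
theorem stmt18 :
    {f : C(Icc (0:ℝ) 1 × Icc (0:ℝ) 1, ℝ) |
      ∀ p : Icc (0:ℝ) 1 × Icc (0:ℝ) 1, ∀ v1 v2 : ℝ, v1 ^ 2 + v2 ^ 2 = 1 →
        ¬ ∃ L : ℝ,
          (nhdsWithin (0:ℝ)
            {h | 0 < h ∧ (p.1.1 + h * v1) ∈ Icc (0:ℝ) 1 ∧ (p.2.1 + h * v2) ∈ Icc (0:ℝ) 1}).NeBot ∧
          Tendsto (fun h : ℝ =>
              if hmem : (p.1.1 + h * v1) ∈ Icc (0:ℝ) 1 ∧ (p.2.1 + h * v2) ∈ Icc (0:ℝ) 1 then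
                (f (⟨p.1.1 + h * v1, hmem.1⟩, ⟨p.2.1 + h * v2, hmem.2⟩) - f p) / h
              else 0)
            (nhdsWithin (0:ℝ)
              {h | 0 < h ∧ (p.1.1 + h * v1) ∈ Icc (0:ℝ) 1 ∧ (p.2.1 + h * v2) ∈ Icc (0:ℝ) 1})
            (nhds L)}
      ∈ residual C(Icc (0:ℝ) 1 × Icc (0:ℝ) 1, ℝ) := by
  let bad (n : ℕ) (ℓ : ℝ × ℝ →L[ℝ] ℝ) := slopeBounded (directionsAlong ℓ) (1 / (n + 1)) (n + 1)
  have hmeagre : IsMeagre (⋃ n : ℕ, bad n (.fst ℝ ℝ ℝ) ∪ bad n (.snd ℝ ℝ ℝ)) :=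
    isMeagre_iUnion fun n => (isNowhereDense_slopeBounded _ (by positivity) _).isMeagre.union
      (isNowhereDense_slopeBounded _ (by positivity) _).isMeagre
  refine mem_of_superset hmeagre ?_
  rintro f hf p v1 v2 hv ⟨L, hne, htend⟩
  obtain ⟨h₀, hh₀, hmem₀⟩ := hne.nonempty_of_mem self_mem_nhdsWithin
  have hsegment : ∀ h ∈ Ioo 0 h₀, toPlane p + h • (v1, v2) ∈ unitSquare := fun h hh =>
    add_smul_mem_unitSquare (toPlane_mem_unitSquare p) hmem₀ ⟨hh.1, hh.2.le⟩
  have hφ : Tendsto (fun h => (f (clamp (toPlane p + h • (v1, v2))) - f p) / h)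
      (𝓝[>] 0) (𝓝 L) := by
    refine (htend.mono_left ?_).congr' ?_
    · rw [← nhdsWithin_Ioo_eq_nhdsGT hh₀]
      exact nhdsWithin_mono _ fun h hh => ⟨hh.1, hsegment h hh⟩
    · filter_upwards [Ioo_mem_nhdsGT hh₀] with h hh
      rw [clamp_of_mem (hsegment h hh)]
      exact dif_pos (hsegment h hh)
  apply hf
  rcases mem_directionsAlong_fst_or_snd (v := (v1, v2)) hv with hdir | hdir
  · obtain ⟨n, hn⟩ := exists_mem_slopeBounded_of_tendsto hdir hh₀ hmem₀ hφ
    exact mem_iUnion.2 ⟨n, Or.inl hn⟩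
  · obtain ⟨n, hn⟩ := exists_mem_slopeBounded_of_tendsto hdir hh₀ hmem₀ hφ
    exact mem_iUnion.2 ⟨n, Or.inr hn⟩
end
end
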